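/- Let K be a field of characteristic p with a p-basis a_1, ..., a_r over a perfect field k, and let E ⊆ K be an intermediate field such that a_1, ..., a_m (m ≤ r) form a p-basis of E over k. Then for every n ≥ 0, the induced map Ω^n_E / Z^n_E → Ω^n_K / Z^n_K is injective, where Z^n_F = {ω ∈ Ω^n_F : dω = 0} denotes the closed (cycle) n-forms. -/

import Mathlib

set_option synthInstance.maxHeartbeats 400000
set_option maxHeartbeats 800000

/-- The additive subgroup of `n`-forms `b·dc₁ ∧ ⋯ ∧ dc_n` inside the exterior algebra of the
absolute Kähler differentials of a field `F`. -/
noncomputable def nForms (F : Type) [Field F] (n : ℕ) :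
    AddSubgroup (ExteriorAlgebra F (KaehlerDifferential ℤ F)) :=
  AddSubgroup.closure
    {x | ∃ (b : F) (c : Fin n → F),
      x = b • ExteriorAlgebra.ιMulti F n fun i => KaehlerDifferential.D ℤ F (c i)}

/-- An additive endomorphism of the exterior algebra of `Ω¹_F` is an exterior derivative if it
sends `b·dc₁ ∧ ⋯ ∧ dc_d` to `db ∧ dc₁ ∧ ⋯ ∧ dc_d` for all `d`. -/
def IsExtDer (F : Type) [Field F]
    (d : ExteriorAlgebra F (KaehlerDifferential ℤ F) →+
         ExteriorAlgebra F (KaehlerDifferential ℤ F)) : Prop :=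
  ∀ (m : ℕ) (b : F) (c : Fin m → F),
    d (b • ExteriorAlgebra.ιMulti F m fun i => KaehlerDifferential.D ℤ F (c i)) =
      ExteriorAlgebra.ιMulti F (m + 1)
        (Fin.cons (KaehlerDifferential.D ℤ F b) fun i => KaehlerDifferential.D ℤ F (c i))

/-!
Since `φ` commutes with the exterior derivatives on `n`-forms, it suffices that `φ` is injective
on `(n+1)`-forms. The differentials `da₁, …, da_m` span `Ω¹_E`, because `E = E^p(a₁, …, a_m)` (the
perfect field `k` consists of `p`-th powers) and `d` kills `p`-th powers; so the `(n+1)`-forms over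
`E` are spanned by the wedge products `da_S`, `S ⊆ {1, …, m}`. Their images in `Ω^{n+1}_K` are
linearly independent because `da₁, …, da_r` are linearly independent in `Ω¹_K`: the reduced
monomials `a^α` (`0 ≤ αᵢ < p`) span `K` over `K^p`, hence form a basis by the count
`[K : K^p] = p^r`, and the `K^p`-linear Euler operators `a^α ↦ αᵢ a^α` are derivations sending
`a_j` to `δᵢⱼ a_j`.
-/

theorem Derivation.map_pow_char {R L M : Type*} [CommRing R] [Field L] [Algebra R L]
    [AddCommGroup M] [Module R M] [Module L M] (p : ℕ) [CharP L p] (D : Derivation R L M)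
    (y : L) : D (y ^ p) = 0 := by
  rw [Derivation.leibniz_pow, ← Nat.cast_smul_eq_nsmul L, CharP.cast_eq_zero L p, zero_smul]

theorem Derivation.map_mem_of_mem_closure {R L M : Type*} [CommRing R] [Field L] [Algebra R L]
    [AddCommGroup M] [Module R M] [Module L M] (D : Derivation R L M) (S : Submodule L M)
    {s : Set L} (hs : ∀ x ∈ s, D x ∈ S) {x : L} (hx : x ∈ Subfield.closure s) : D x ∈ S := by
  induction hx using Subfield.closure_induction with
  | mem x hx => exact hs x hx
  | one => simp
  | add x y _ _ hx hy => rw [map_add]; exact S.add_mem hx hy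
  | neg x _ hx => rw [map_neg]; exact S.neg_mem hx
  | mul x y _ _ hx hy =>
    rw [Derivation.leibniz]; exact S.add_mem (S.smul_mem x hy) (S.smul_mem y hx)
  | inv x _ hx => rw [Derivation.leibniz_inv]; exact S.smul_mem _ hx

theorem KaehlerDifferential.span_range_D_eq_top (R : Type*) {L ι : Type*} [CommRing R] [Field L]
    [Algebra R L] (p : ℕ) [Fact p.Prime] [CharP L p] (b : ι → L)
    (hgen : Subfield.closure (Set.range (frobenius L p) ∪ Set.range b) = ⊤) :
    Submodule.span L (Set.range fun i => D R L (b i)) = ⊤ := by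
  rw [eq_top_iff, ← span_range_derivation R L, Submodule.span_le]
  rintro _ ⟨x, rfl⟩
  refine (D R L).map_mem_of_mem_closure _ ?_ (hgen ▸ Subfield.mem_top x)
  rintro _ (⟨y, rfl⟩ | ⟨i, rfl⟩)
  · rw [frobenius_def, Derivation.map_pow_char p]
    exact Submodule.zero_mem _
  · exact Submodule.subset_span ⟨i, rfl⟩

namespace PBasis

variable {L ι : Type*} [Field L] [Fintype ι] (b : ι → L)

def monomial (n : ι → ℕ) : L := ∏ i, b i ^ n i

theorem monomial_add (n n' : ι → ℕ) : monomial b (n + n') = monomial b n * monomial b n' := by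
  simp only [monomial, Pi.add_apply, pow_add, Finset.prod_mul_distrib]

theorem monomial_zero : monomial b 0 = 1 := by simp [monomial]

theorem monomial_single [DecidableEq ι] (i : ι) : monomial b (Pi.single i 1) = b i := by
  rw [monomial, Finset.prod_eq_single i (fun j _ hj => by simp [hj]) (by simp)]
  simp

theorem monomial_eq_pow_mul (p : ℕ) (n : ι → ℕ) :
    monomial b n = monomial b (fun i => n i / p) ^ p * monomial b (fun i => n i % p) := by
  simp only [monomial, ← Finset.prod_pow, ← Finset.prod_mul_distrib, ← pow_mul, ← pow_add,
    mul_comm _ p, Nat.div_add_mod]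

def reducedMonomial (p : ℕ) (α : ι → Fin p) : L := monomial b fun i => α i

variable (p : ℕ) [Fact p.Prime] [CharP L p]

def reduce (n : ι → ℕ) : ι → Fin p := fun i => ⟨n i % p, Nat.mod_lt _ (Fact.out : p.Prime).pos⟩

theorem monomial_eq_smul_reducedMonomial (n : ι → ℕ) :
    monomial b n = (⟨monomial b (fun i => n i / p) ^ p, _, rfl⟩ : (frobenius L p).fieldRange) •
      reducedMonomial b p (reduce p n) :=
  monomial_eq_pow_mul b p n

theorem monomial_mem_span (n : ι → ℕ) :
    monomial b n ∈
      Submodule.span (frobenius L p).fieldRange (Set.range (reducedMonomial b p)) := by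
  rw [monomial_eq_smul_reducedMonomial b p]
  exact Submodule.smul_mem _ _ (Submodule.subset_span ⟨_, rfl⟩)

variable [DecidableEq ι]

theorem span_reducedMonomial_eq_top
    (hgen : Subfield.closure (Set.range (frobenius L p) ∪ Set.range b) = ⊤) :
    Submodule.span (frobenius L p).fieldRange (Set.range (reducedMonomial b p)) = ⊤ := by
  set W := Submodule.span (frobenius L p).fieldRange (Set.range (reducedMonomial b p))
  have hmul : ∀ x y, x ∈ W → y ∈ W → x * y ∈ W := fun x y hx hy => by
    have : W * W ≤ W := by
      rw [Submodule.span_mul_span, Submodule.span_le]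
      rintro _ ⟨_, ⟨α, rfl⟩, _, ⟨β, rfl⟩, rfl⟩
      show monomial b _ * monomial b _ ∈ W
      rw [← monomial_add]
      exact monomial_mem_span b p _
    exact this (Submodule.mul_mem_mul hx hy)
  let A := W.toSubalgebra (monomial_zero b ▸ monomial_mem_span b p 0) hmul
  have hA : Subalgebra.toSubmodule A = W := Submodule.toSubalgebra_toSubmodule _ _ _
  -- `W` is finite-dimensional, so its elements are integral and `A` is a field.
  let A' : IntermediateField (frobenius L p).fieldRange L := A.toIntermediateField fun x hx =>
    (IsIntegral.of_mem_of_fg A (hA ▸ Submodule.fg_span (Set.finite_range _)) x hx).inv_mem hx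
  have hle : Subfield.closure (Set.range (frobenius L p) ∪ Set.range b) ≤ A'.toSubfield := by
    rw [Subfield.closure_le]
    rintro _ (⟨y, rfl⟩ | ⟨i, rfl⟩)
    · exact A'.algebraMap_mem ⟨frobenius L p y, y, rfl⟩
    · show b i ∈ W
      rw [← monomial_single b i]
      exact monomial_mem_span b p _
  rw [hgen] at hle
  exact eq_top_iff.2 fun x _ => hle (Subfield.mem_top x)

section Basis

variable (hgen : Subfield.closure (Set.range (frobenius L p) ∪ Set.range b) = ⊤)
  (hdim : Module.finrank (frobenius L p).fieldRange L = p ^ Fintype.card ι)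

noncomputable def reducedMonomialBasis :
    Module.Basis (ι → Fin p) (frobenius L p).fieldRange L :=
  basisOfTopLeSpanOfCardEqFinrank _ (span_reducedMonomial_eq_top b p hgen).ge (by simp [hdim])

theorem coe_reducedMonomialBasis : ⇑(reducedMonomialBasis b p hgen hdim) = reducedMonomial b p :=
  coe_basisOfTopLeSpanOfCardEqFinrank _ _ _

noncomputable def eulerMap : L →ₗ[(frobenius L p).fieldRange] ι → L :=
  (reducedMonomialBasis b p hgen hdim).constr ℕ fun α => reducedMonomial b p α • fun i => (α i : L)

theorem eulerMap_monomial (n : ι → ℕ) :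
    eulerMap b p hgen hdim (monomial b n) = monomial b n • fun i => (n i : L) := by
  rw [monomial_eq_smul_reducedMonomial b p n, LinearMap.map_smul, eulerMap,
    ← coe_reducedMonomialBasis b p hgen hdim, Module.Basis.constr_basis,
    coe_reducedMonomialBasis b p hgen hdim, smul_assoc]
  congr 2
  funext i
  exact (CharP.cast_eq_mod L p (n i)).symm

theorem eulerMap_mul (x y : L) :
    eulerMap b p hgen hdim (x * y) =
      x • eulerMap b p hgen hdim y + y • eulerMap b p hgen hdim x := by
  have hspan := (reducedMonomialBasis b p hgen hdim).span_eq
  rw [coe_reducedMonomialBasis] at hspan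
  have hx : x ∈ Submodule.span _ (Set.range (reducedMonomial b p)) := hspan ▸ Submodule.mem_top
  have hy : y ∈ Submodule.span _ (Set.range (reducedMonomial b p)) := hspan ▸ Submodule.mem_top
  induction hx using Submodule.span_induction generalizing y with
  | mem x hx =>
    obtain ⟨α, rfl⟩ := hx
    induction hy using Submodule.span_induction with
    | mem y hy =>
      obtain ⟨β, rfl⟩ := hy
      simp only [reducedMonomial, ← monomial_add, eulerMap_monomial]
      rw [monomial_add, smul_smul, smul_smul, mul_comm (monomial b _), ← smul_add]
      congr 1
      funext i
      simp [add_comm]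
    | zero => simp
    | add y y' _ _ ihy ihy' =>
      simp only [mul_add, map_add, ihy, ihy', smul_add, add_smul]
      abel
    | smul c y _ ihy =>
      rw [mul_smul_comm, map_smul, map_smul, ihy, smul_add, smul_comm c, smul_assoc]
  | zero => simp
  | add x x' _ _ ihx ihx' =>
    simp only [add_mul, map_add, ihx y hy, ihx' y hy, add_smul, smul_add]
    abel
  | smul c x _ ihx =>
    rw [smul_mul_assoc, map_smul, map_smul, ihx y hy, smul_add, smul_comm c y, smul_assoc]

noncomputable def eulerDerivation : Derivation ℤ L (ι → L) :=
  (Derivation.mk' (eulerMap b p hgen hdim) (eulerMap_mul b p hgen hdim)).restrictScalars ℤ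

theorem eulerDerivation_apply (j : ι) :
    eulerDerivation b p hgen hdim (b j) = b j • Pi.single j 1 := by
  have h := eulerMap_monomial b p hgen hdim (Pi.single j 1)
  rw [monomial_single] at h
  rw [eulerDerivation, Derivation.restrictScalars_apply, Derivation.coe_mk', h]
  congr 1
  funext i
  by_cases hij : i = j <;> simp [hij]

end Basis

theorem ne_zero_of_finrank_eq
    (hgen : Subfield.closure (Set.range (frobenius L p) ∪ Set.range b) = ⊤)
    (hdim : Module.finrank (frobenius L p).fieldRange L = p ^ Fintype.card ι) (j : ι) :
    b j ≠ 0 := by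
  have hne := (reducedMonomialBasis b p hgen hdim).ne_zero (reduce p (Pi.single j 1))
  have hred : (fun i => (reduce p (Pi.single j 1) i : ℕ)) = Pi.single j 1 := by
    funext i
    by_cases hij : i = j
    · simp [reduce, hij, Nat.mod_eq_of_lt (Fact.out : p.Prime).one_lt]
    · simp [reduce, hij]
  rwa [coe_reducedMonomialBasis, reducedMonomial, hred, monomial_single] at hne

theorem linearIndependent_D
    (hgen : Subfield.closure (Set.range (frobenius L p) ∪ Set.range b) = ⊤)
    (hdim : Module.finrank (frobenius L p).fieldRange L = p ^ Fintype.card ι) :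
    LinearIndependent L fun i => KaehlerDifferential.D ℤ L (b i) := by
  let w : ι → Lˣ := fun j => Units.mk0 (b j) (ne_zero_of_finrank_eq b p hgen hdim j)
  have hcomp : (eulerDerivation b p hgen hdim).liftKaehlerDifferential ∘
      (fun i => KaehlerDifferential.D ℤ L (b i)) = w • ⇑(Pi.basisFun L ι) := by
    funext j
    simp [w, eulerDerivation_apply, Units.smul_def]
  exact .of_comp _ (hcomp ▸ (Pi.basisFun L ι).linearIndependent.units_smul w)

end PBasis

theorem Subfield.coe_subset_image_pow {K : Type*} [Field K] (p : ℕ) [Fact p.Prime]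
    [CharP K p] (k : Subfield K) [PerfectField k] :
    (k : Set K) ⊆ (fun x : K => x ^ p) '' (k : Set K) := by
  intro c hc
  obtain ⟨e, he⟩ := surjective_frobenius k p ⟨c, hc⟩
  exact ⟨e, e.2, congrArg Subtype.val he⟩

theorem Subfield.mem_closure_of_coe_mem_closure_image {K : Type*} [Field K] {E : Subfield K}
    {T : Set E} {x : E} (hx : (x : K) ∈ closure (E.subtype '' T)) : x ∈ closure T := by
  rw [← RingHom.map_field_closure] at hx
  obtain ⟨y, hy, hyx⟩ := hx
  rwa [← Subtype.ext hyx]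

theorem Subfield.closure_range_frobenius_union_eq_top {K : Type*} [Field K] (p : ℕ)
    [Fact p.Prime] [CharP K p] {k E : Subfield K} [PerfectField k] (hkE : k ≤ E) {T : Set E}
    (hE : (E : Set K) ⊆
      closure ((k : Set K) ∪ (fun x : K => x ^ p) '' (E : Set K) ∪ E.subtype '' T)) :
    closure (Set.range (frobenius E p) ∪ T) = ⊤ := by
  have hgen : (k : Set K) ∪ (fun x : K => x ^ p) '' (E : Set K) ∪ E.subtype '' T ⊆
      E.subtype '' (Set.range (frobenius E p) ∪ T) := by
    rintro _ ((hz | ⟨y, hy, rfl⟩) | ⟨t, ht, rfl⟩)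
    · obtain ⟨e, he, rfl⟩ := k.coe_subset_image_pow p hz
      exact ⟨frobenius E p ⟨e, hkE he⟩, Or.inl ⟨_, rfl⟩, rfl⟩
    · exact ⟨frobenius E p ⟨y, hy⟩, Or.inl ⟨_, rfl⟩, rfl⟩
    · exact ⟨t, Or.inr ht, rfl⟩
  exact eq_top_iff.2 fun x _ =>
    mem_closure_of_coe_mem_closure_image (closure_mono hgen (hE x.2))

theorem ExteriorAlgebra.eq_zero_of_mem_exteriorPower_of_map_eq_zero {ι E K M N : Type*}
    [LinearOrder ι] [Fintype ι] [CommRing E] [Field K] [AddCommGroup M] [Module E M]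
    [AddCommGroup N] [Module K N] {f : E →+* K} (hf : Function.Injective f) {v : ι → M}
    {w : ι → N} (hv : Submodule.span E (Set.range v) = ⊤) (hw : LinearIndependent K w) {d : ℕ}
    {φ : ExteriorAlgebra E M →+ ExteriorAlgebra K N}
    (hφ : ∀ (c : E) (s : Set.powersetCard ι d),
      φ (c • ιMulti_family E d v s) = f c • ιMulti_family K d w s)
    {z : ExteriorAlgebra E M} (hz : z ∈ ⋀[E]^d M) (h0 : φ z = 0) : z = 0 := by
  rw [← exteriorPower.ιMulti_family_span_fixedDegree_of_span E hv,
    Submodule.mem_span_range_iff_exists_fun] at hz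
  obtain ⟨c, rfl⟩ := hz
  simp only [map_sum, hφ] at h0
  have hw' : LinearIndependent K (ιMulti_family K d w) := by
    rw [exteriorPower.ιMulti_family_eq_coe_comp]
    exact (exteriorPower.ιMulti_family_linearIndependent_field d hw).map'
      (⋀[K]^d N).subtype (Submodule.ker_subtype _)
  have hc : ∀ s, c s = 0 := fun s =>
    hf ((Fintype.linearIndependent_iff.1 hw' _ h0 s).trans (map_zero f).symm)
  simp [hc]

theorem nForms_le_exteriorPower (F : Type) [Field F] (n : ℕ) :
    nForms F n ≤ (⋀[F]^n (KaehlerDifferential ℤ F)).toAddSubgroup := by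
  rw [nForms, AddSubgroup.closure_le]
  rintro _ ⟨b, c, rfl⟩
  exact Submodule.smul_mem _ b (ExteriorAlgebra.ιMulti_range F n ⟨_, rfl⟩)

theorem ιMulti_cons_D (F : Type) [Field F] {m : ℕ} (b : F) (c : Fin m → F) :
    ExteriorAlgebra.ιMulti F (m + 1)
        (Fin.cons (KaehlerDifferential.D ℤ F b) fun i => KaehlerDifferential.D ℤ F (c i)) =
      ExteriorAlgebra.ιMulti F (m + 1) fun i =>
        KaehlerDifferential.D ℤ F ((Fin.cons b c : Fin (m + 1) → F) i) :=
  congrArg _ (Fin.comp_cons _ _ _).symm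

theorem IsExtDer.map_mem_nForms {F : Type} [Field F]
    {d : ExteriorAlgebra F (KaehlerDifferential ℤ F) →+
      ExteriorAlgebra F (KaehlerDifferential ℤ F)}
    (hd : IsExtDer F d) {n : ℕ} {x : ExteriorAlgebra F (KaehlerDifferential ℤ F)}
    (hx : x ∈ nForms F n) : d x ∈ nForms F (n + 1) := by
  suffices nForms F n ≤ (nForms F (n + 1)).comap d from this hx
  rw [nForms, AddSubgroup.closure_le]
  rintro _ ⟨b, c, rfl⟩
  refine AddSubgroup.subset_closure ⟨1, Fin.cons b c, ?_⟩
  rw [hd, one_smul, ιMulti_cons_D]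

theorem map_extDer_eq_extDer_map {E K : Type} [Field E] [Field K] {f : E →+* K}
    {φ : ExteriorAlgebra E (KaehlerDifferential ℤ E) →+
      ExteriorAlgebra K (KaehlerDifferential ℤ K)}
    (hφ : ∀ (d : ℕ) (b : E) (c : Fin d → E),
      φ (b • ExteriorAlgebra.ιMulti E d fun i => KaehlerDifferential.D ℤ E (c i)) =
        f b • ExteriorAlgebra.ιMulti K d fun i => KaehlerDifferential.D ℤ K (f (c i)))
    {dE : ExteriorAlgebra E (KaehlerDifferential ℤ E) →+
      ExteriorAlgebra E (KaehlerDifferential ℤ E)} (hdE : IsExtDer E dE)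
    {dK : ExteriorAlgebra K (KaehlerDifferential ℤ K) →+
      ExteriorAlgebra K (KaehlerDifferential ℤ K)} (hdK : IsExtDer K dK)
    {n : ℕ} {x : ExteriorAlgebra E (KaehlerDifferential ℤ E)} (hx : x ∈ nForms E n) :
    φ (dE x) = dK (φ x) := by
  refine AddMonoidHom.eqOn_closure (f := φ.comp dE) (g := dK.comp φ) ?_ hx
  rintro _ ⟨b, c, rfl⟩
  have h := hφ (n + 1) 1 (Fin.cons b c)
  rw [one_smul, map_one, one_smul] at h
  rw [AddMonoidHom.comp_apply, AddMonoidHom.comp_apply, hdE, ιMulti_cons_D, h, hφ, hdK]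
  exact congrArg _ (Fin.comp_cons (fun y => KaehlerDifferential.D ℤ K (f y)) b c)

theorem kaehler_nforms_mod_closed_injective_of_pBasis_general
    (p : ℕ) [Fact p.Prime] (K : Type) [Field K] [CharP K p]
    (k E : Subfield K) [PerfectField ↥k] (hkE : k ≤ E)
    (r m : ℕ) (hmr : m ≤ r)
    (a : Fin r → K) (haE : ∀ i : Fin r, (i : ℕ) < m → a i ∈ E)
    (hbasisK : Subfield.closure ((k : Set K) ∪ Set.range (frobenius K p) ∪ Set.range a) = ⊤)
    (hdimK : Module.finrank (↥(frobenius K p).fieldRange) K = p ^ r)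
    (hbasisE : (E : Set K) ⊆ Subfield.closure
      ((k : Set K) ∪ ((fun x : K => x ^ p) '' (E : Set K)) ∪ (a '' {i : Fin r | (i : ℕ) < m})))
    (φ : ExteriorAlgebra ↥E (KaehlerDifferential ℤ ↥E) →+
         ExteriorAlgebra K (KaehlerDifferential ℤ K))
    (hφ : ∀ (d : ℕ) (b : ↥E) (c : Fin d → ↥E),
      φ (b • ExteriorAlgebra.ιMulti ↥E d fun i => KaehlerDifferential.D ℤ ↥E (c i)) =
        (b : K) • ExteriorAlgebra.ιMulti K d fun i => KaehlerDifferential.D ℤ K ((c i : K)))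
    (dE : ExteriorAlgebra ↥E (KaehlerDifferential ℤ ↥E) →+
          ExteriorAlgebra ↥E (KaehlerDifferential ℤ ↥E))
    (hdE : IsExtDer ↥E dE)
    (dK : ExteriorAlgebra K (KaehlerDifferential ℤ K) →+
          ExteriorAlgebra K (KaehlerDifferential ℤ K))
    (hdK : IsExtDer K dK)
    (n : ℕ) (x : ExteriorAlgebra ↥E (KaehlerDifferential ℤ ↥E)) (hx : x ∈ nForms ↥E n) :
    dK (φ x) = 0 → dE x = 0 := by
  intro hclosed
  let aE : Fin m → E := fun i => ⟨a (Fin.castLE hmr i), haE _ i.2⟩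
  have hk : (k : Set K) ⊆ Set.range (frobenius K p) :=
    (k.coe_subset_image_pow p).trans (Set.image_subset_range _ _)
  have hgenK : Subfield.closure (Set.range (frobenius K p) ∪ Set.range a) = ⊤ := by
    rwa [Set.union_eq_right.2 hk] at hbasisK
  have hgenE : Subfield.closure (Set.range (frobenius E p) ∪ Set.range aE) = ⊤ := by
    refine Subfield.closure_range_frobenius_union_eq_top p hkE (hbasisE.trans
      (Subfield.closure_mono (Set.union_subset_union_right _ ?_)))
    rintro _ ⟨i, hi, rfl⟩
    exact ⟨aE ⟨i, hi⟩, ⟨_, rfl⟩, rfl⟩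
  have hindep :
      LinearIndependent K fun i : Fin m => KaehlerDifferential.D ℤ K (a (Fin.castLE hmr i)) :=
    (PBasis.linearIndependent_D a p hgenK (by rwa [Fintype.card_fin])).comp _
      (Fin.castLE_injective hmr)
  refine ExteriorAlgebra.eq_zero_of_mem_exteriorPower_of_map_eq_zero E.subtype_injective
    (KaehlerDifferential.span_range_D_eq_top ℤ p aE hgenE) hindep (fun c s => hφ _ c _)
    (nForms_le_exteriorPower E (n + 1) (hdE.map_mem_nForms hx)) ?_
  rw [map_extDer_eq_extDer_map (f := E.subtype) hφ hdE hdK hx, hclosed]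

/-- Let `K` be a field of characteristic `p` with `p`-basis `a₁,…,a_r` over a
perfect subfield `k`, and `E ⊆ K` an intermediate field such that `a₁,…,a_m` (`m ≤ r`) form a
`p`-basis of `E` over `k`.  Then for every `n ≥ 0` the induced map
`Ω^n_E/Z^n_E → Ω^n_K/Z^n_K` is injective, where `Z^n` denotes the closed `n`-forms (kernels of
the exterior derivatives `dE`, `dK`): if an `n`-form over `E` maps to a closed form over `K`,
it is already closed over `E`. -/
theorem kaehler_nforms_mod_closed_injective_of_pBasis
    (p : ℕ) [Fact p.Prime] (K : Type) [Field K] [CharP K p]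
    (k E : Subfield K) [PerfectField ↥k] (hkE : k ≤ E)
    (r m : ℕ) (hmr : m ≤ r)
    (a : Fin r → K) (haE : ∀ i : Fin r, (i : ℕ) < m → a i ∈ E)
    (hbasisK : Subfield.closure ((k : Set K) ∪ Set.range (frobenius K p) ∪ Set.range a) = ⊤)
    (hdimK : Module.finrank (↥(frobenius K p).fieldRange) K = p ^ r)
    (hbasisE : (E : Set K) ⊆ Subfield.closure
      ((k : Set K) ∪ ((fun x : K => x ^ p) '' (E : Set K)) ∪ (a '' {i : Fin r | (i : ℕ) < m})))
    [CharP ↥E p]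
    (hdimE : Module.finrank (↥(frobenius ↥E p).fieldRange) ↥E = p ^ m)
    (φ : ExteriorAlgebra ↥E (KaehlerDifferential ℤ ↥E) →+
         ExteriorAlgebra K (KaehlerDifferential ℤ K))
    (hφ : ∀ (d : ℕ) (b : ↥E) (c : Fin d → ↥E),
      φ (b • ExteriorAlgebra.ιMulti ↥E d fun i => KaehlerDifferential.D ℤ ↥E (c i)) =
        (b : K) • ExteriorAlgebra.ιMulti K d fun i => KaehlerDifferential.D ℤ K ((c i : K)))
    (dE : ExteriorAlgebra ↥E (KaehlerDifferential ℤ ↥E) →+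
          ExteriorAlgebra ↥E (KaehlerDifferential ℤ ↥E))
    (hdE : IsExtDer ↥E dE)
    (dK : ExteriorAlgebra K (KaehlerDifferential ℤ K) →+
          ExteriorAlgebra K (KaehlerDifferential ℤ K))
    (hdK : IsExtDer K dK)
    (n : ℕ) (x : ExteriorAlgebra ↥E (KaehlerDifferential ℤ ↥E)) (hx : x ∈ nForms ↥E n) :
    dK (φ x) = 0 → dE x = 0 :=
  kaehler_nforms_mod_closed_injective_of_pBasis_general p K k E hkE r m hmr a haE hbasisK hdimK
    hbasisE φ hφ dE hdE dK hdK n x hx
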